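/- Assume f satisfies (f1) and (f2), let 0 < a < b < ∞, and let u be a positive solution of (R). Then there exists a number c ∈ (a,b) such that u'(r) > 0 for r ∈ [a,c) and u'(r) < 0 for r ∈ (c,b); moreover, u(c) > β. -/

import Mathlib

open Set Filter MeasureTheory

/-- `F(s) = ∫₀ˢ f(t) dt`. -/
noncomputable def Fint (f : ℝ → ℝ) (s : ℝ) : ℝ := ∫ t in (0:ℝ)..s, f t

/-- Condition (f1): `f` is continuous on `[0,∞)`, continuously differentiable on `(0,∞)`,
and `f' ∈ L¹(0,1)`. -/
def CondF1 (f : ℝ → ℝ) : Prop :=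
  ContinuousOn f (Ici 0) ∧ (∀ s ∈ Ioi (0:ℝ), DifferentiableAt ℝ f s) ∧
  ContinuousOn (deriv f) (Ioi 0) ∧ IntervalIntegrable (deriv f) volume 0 1

/-- Condition (f2) in the case `β > B > 0`. -/
def CondF2B (f : ℝ → ℝ) (β B : ℝ) : Prop :=
  f 0 = 0 ∧ 0 < B ∧ B < β ∧ (∀ s, B < s → 0 < f s) ∧
  (∀ s ∈ Icc (0:ℝ) B, f s ≤ 0) ∧ (∃ ε > (0:ℝ), ∀ s ∈ Ioo (0:ℝ) ε, f s < 0) ∧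
  Fint f β = 0

/-- Condition (f2): either `β = B = 0` and `f > 0` on `(0,∞)`, or `β > B > 0` with the
sign conditions and `F(β) = 0`. -/
def CondF2 (f : ℝ → ℝ) (β B : ℝ) : Prop :=
  (β = 0 ∧ B = 0 ∧ f 0 = 0 ∧ ∀ s, 0 < s → 0 < f s) ∨ CondF2B f β B

/-- Condition (f3): the derivative of `s ↦ F(s)/f(s)` is `≥ (n-2)/(2n)` for every `s > β`. -/
def CondF3 (n : ℕ) (f : ℝ → ℝ) (β : ℝ) : Prop :=
  ∀ s, β < s → ∃ d, ((n : ℝ) - 2) / (2 * (n : ℝ)) ≤ d ∧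
    HasDerivAt (fun t => Fint f t / f t) d s

/-- Condition (f4): superlinearity `f(s) ≤ f'(s)(s - B)` for `s > B`, with
`f(s) ≢ f'(s)(s - B)` on `[B, β]`. -/
def CondF4 (f : ℝ → ℝ) (β B : ℝ) : Prop :=
  (∀ s, B < s → f s ≤ deriv f s * (s - B)) ∧
  ¬ (∀ s ∈ Icc B β, f s = deriv f s * (s - B))

/-- A positive solution of problem (R) on the annulus `a < |x| < b`:
`u` is continuous on `[a,b]`, differentiable up to the boundary with derivative `u'`
(one-sided at the endpoints), `u'` is continuous on `[a,b]`, `u` is twice continuously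
differentiable on `(a,b)` where it satisfies `u'' + ((n-1)/r) u' + f(u) = 0`,
`u(a) = u(b) = 0` and `u > 0` on `(a,b)`. -/
def IsPosSolAnn (n : ℕ) (a b : ℝ) (f u u' : ℝ → ℝ) : Prop :=
  ContinuousOn u (Icc a b) ∧
  (∀ r ∈ Icc a b, HasDerivWithinAt u (u' r) (Icc a b) r) ∧
  ContinuousOn u' (Icc a b) ∧
  (∀ r ∈ Ioo a b, HasDerivAt u (u' r) r) ∧
  (∀ r ∈ Ioo a b, HasDerivAt u' (-(((n : ℝ) - 1) / r * u' r + f (u r))) r) ∧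
  u a = 0 ∧ u b = 0 ∧ (∀ r ∈ Ioo a b, 0 < u r)

/-- A positive solution of the exterior problem (R) with `b = ∞`:
`u` is continuous on `[a,∞)`, differentiable on `[a,∞)` with derivative `u'`
(one-sided at `a`), twice continuously differentiable on `(a,∞)` where it satisfies
`u'' + ((n-1)/r) u' + f(u) = 0`, `u(a) = 0`, `u > 0` on `(a,∞)` and `u(r) → 0` as `r → ∞`. -/
def IsPosSolExt (n : ℕ) (a : ℝ) (f u u' : ℝ → ℝ) : Prop :=
  ContinuousOn u (Ici a) ∧
  (∀ r ∈ Ici a, HasDerivWithinAt u (u' r) (Ici a) r) ∧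
  (∀ r ∈ Ioi a, HasDerivAt u (u' r) r) ∧
  (∀ r ∈ Ioi a, HasDerivAt u' (-(((n : ℝ) - 1) / r * u' r + f (u r))) r) ∧
  u a = 0 ∧ (∀ r ∈ Ioi a, 0 < u r) ∧
  Tendsto u atTop (nhds 0)

/-- The Erbe–Tang functional
`P(s) = -2n (F(s)/f(s)) ρ(s)^{n-1} u'(ρ(s)) - ρ(s)^n (u'(ρ(s)))² - 2 ρ(s)^n F(s)`,
where `ρ` is an inverse branch of the solution `u` with derivative `u'`. -/
noncomputable def Pfun (n : ℕ) (f : ℝ → ℝ) (ρ u' : ℝ → ℝ) (s : ℝ) : ℝ :=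
  -2 * (n : ℝ) * (Fint f s / f s) * (ρ s) ^ (n - 1) * u' (ρ s)
    - (ρ s) ^ n * (u' (ρ s)) ^ 2 - 2 * (ρ s) ^ n * Fint f s

open Topology

/- The energy `E = u'²/2 + F(u)` is non-increasing, since `E' = -((n-1)/r) u'²`, and it is
positive on `(a,b)`: otherwise, as `E(b) = u'(b)²/2 ≥ 0`, it would vanish on some `[r₀,b]`,
forcing `u' = 0` there (as `n > 1`) and `u(r₀) = u(b) = 0`. Hence `F(u) > 0` at every
critical point, which forces `u > β` and `u'' = -f(u) < 0` there. So every critical point is a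
strict local maximum; two of them would enclose a minimum of `u`, itself a critical point.
The unique critical point is the maximum point of `u`, and `u' ≠ 0` elsewhere (also at `a`,
where `E(a) = u'(a)²/2 > 0`) fixes the sign of `u'` on either side of it. -/

section Calculus

variable {g g' : ℝ → ℝ}

theorem IsPreconnected.pos_of_forall_ne_zero {s : Set ℝ} (hs : IsPreconnected s)
    (hg : ContinuousOn g s) (h0 : ∀ x ∈ s, g x ≠ 0) {y : ℝ} (hy : y ∈ s) (hgy : 0 < g y) :
    ∀ x ∈ s, 0 < g x := by
  intro x hx
  by_contra! hgx
  obtain ⟨z, hz, hgz⟩ := hs.intermediate_value hx hy hg ⟨hgx, hgy.le⟩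
  exact h0 z hz hgz

theorem eventually_lt_of_hasDerivAt_deriv_neg {x d : ℝ}
    (hg : ∀ᶠ y in 𝓝 x, HasDerivAt g (g' y) y) (hg' : HasDerivAt g' d x) (hd : d < 0)
    (hx : g' x = 0) : ∀ᶠ y in 𝓝[≠] x, g y < g x := by
  have hsign := eventually_nhdsWithin_sign_eq_of_deriv_neg (hg'.deriv ▸ hd) hx
  obtain ⟨l, r, hx_mem, hlr⟩ := mem_nhds_iff_exists_Ioo_subset.1 (hg.and hsign)
  have hcont : ContinuousOn g (Ioo l r) := fun y hy => (hlr hy).1.continuousAt.continuousWithinAt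
  have hmono : StrictMonoOn g (Ioc l x) := by
    refine strictMonoOn_of_deriv_pos (convex_Ioc l x)
      (hcont.mono (Ioc_subset_Ioo_right hx_mem.2)) fun y hy => ?_
    rw [interior_Ioc] at hy
    obtain ⟨hgy, hsy⟩ := hlr ⟨hy.1, hy.2.trans hx_mem.2⟩
    rw [hgy.deriv]
    exact sign_eq_one_iff.1 (hsy.trans (sign_eq_one_iff.2 (sub_pos.2 hy.2)))
  have hanti : StrictAntiOn g (Ico x r) := by
    refine strictAntiOn_of_deriv_neg (convex_Ico x r)
      (hcont.mono (Ico_subset_Ioo_left hx_mem.1)) fun y hy => ?_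
    rw [interior_Ico] at hy
    obtain ⟨hgy, hsy⟩ := hlr ⟨hx_mem.1.trans hy.1, hy.2⟩
    rw [hgy.deriv]
    exact sign_eq_neg_one_iff.1 (hsy.trans (sign_eq_neg_one_iff.2 (sub_neg.2 hy.1)))
  filter_upwards [nhdsWithin_le_nhds (Ioo_mem_nhds hx_mem.1 hx_mem.2), self_mem_nhdsWithin]
    with y hy hyx
  rcases (show y ≠ x from hyx).lt_or_gt with hlt | hgt
  · exact hmono ⟨hy.1, hlt.le⟩ ⟨hx_mem.1, le_rfl⟩ hlt
  · exact hanti ⟨le_rfl, hx_mem.2⟩ ⟨hgt.le, hy.2⟩ hgt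

theorem not_isMinOn_Icc_of_eventually_lt {x x₀ x₁ : ℝ} (h : ∀ᶠ y in 𝓝[≠] x, g y < g x)
    (hx : x ∈ Icc x₀ x₁) (h01 : x₀ < x₁) : ¬ IsMinOn g (Icc x₀ x₁) x := by
  intro hmin
  rcases hx.2.lt_or_eq with hlt | rfl
  · obtain ⟨y, ⟨hgy, hyx⟩, hxy⟩ :=
      ((h.filter_mono (nhdsGT_le_nhdsNE x)).and (Ioo_mem_nhdsGT hlt)).and self_mem_nhdsWithin |>.exists
    exact (hgy.trans_le (hmin ⟨hx.1.trans hxy.le, hyx.2.le⟩)).false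
  · obtain ⟨y, ⟨hgy, hyx⟩, hxy⟩ :=
      ((h.filter_mono (nhdsLT_le_nhdsNE x)).and (Ioo_mem_nhdsLT h01)).and self_mem_nhdsWithin |>.exists
    exact (hgy.trans_le (hmin ⟨hyx.1.le, (show y < x from hxy).le⟩)).false

theorem eq_of_deriv_eq_zero_of_strictLocalMax {a b x₀ x₁ : ℝ}
    (hg : ∀ x ∈ Ioo a b, HasDerivAt g (g' x) x)
    (hmax : ∀ x ∈ Ioo a b, g' x = 0 → ∀ᶠ y in 𝓝[≠] x, g y < g x)
    (hx₀ : x₀ ∈ Ioo a b) (hx₁ : x₁ ∈ Ioo a b) (h₀ : g' x₀ = 0) (h₁ : g' x₁ = 0) : x₀ = x₁ := by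
  wlog hlt : x₀ < x₁ generalizing x₀ x₁
  · rcases (not_lt.1 hlt).eq_or_lt with heq | hgt
    · exact heq.symm
    · exact (this hx₁ hx₀ h₁ h₀ hgt).symm
  have hsub : Icc x₀ x₁ ⊆ Ioo a b := Icc_subset_Ioo hx₀.1 hx₁.2
  obtain ⟨x, hx, hmin⟩ := isCompact_Icc.exists_isMinOn (nonempty_Icc.2 hlt.le)
    fun y hy => (hg y (hsub hy)).continuousAt.continuousWithinAt
  have hcrit : g' x = 0 := by
    rcases hx.1.eq_or_lt with rfl | hx₀x
    · exact h₀
    rcases hx.2.eq_or_lt with rfl | hxx₁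
    · exact h₁
    exact (hmin.isLocalMin (Icc_mem_nhds hx₀x hxx₁)).hasDerivAt_eq_zero (hg x (hsub hx))
  exact absurd hmin (not_isMinOn_Icc_of_eventually_lt (hmax x (hsub hx) hcrit) hx hlt)

end Calculus

section Primitive

variable {f : ℝ → ℝ}

theorem eqOn_Fint_primitive :
    EqOn (Fint f) (fun s => ∫ t in (0:ℝ)..s, f (max t 0)) (Ici 0) := by
  intro s hs
  refine intervalIntegral.integral_congr fun t ht => ?_
  rw [uIcc_of_le hs] at ht
  simp only [max_eq_left ht.1]

theorem continuous_comp_max_zero (hf : ContinuousOn f (Ici 0)) :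
    Continuous fun t => f (max t 0) :=
  hf.comp_continuous (continuous_id.max continuous_const) fun t => le_max_right t 0

theorem hasDerivAt_Fint (hf : ContinuousOn f (Ici 0)) {s : ℝ} (hs : 0 < s) :
    HasDerivAt (Fint f) (f s) s := by
  have h := ((continuous_comp_max_zero hf).integral_hasStrictDerivAt 0 s).hasDerivAt
  rw [max_eq_left hs.le] at h
  exact h.congr_of_eventuallyEq <| (eventually_ge_nhds hs).mono fun t ht =>
    eqOn_Fint_primitive (mem_Ici.2 ht)

theorem continuousOn_Fint (hf : ContinuousOn f (Ici 0)) : ContinuousOn (Fint f) (Ici 0) :=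
  (intervalIntegral.continuous_primitive
    (fun _ _ => (continuous_comp_max_zero hf).intervalIntegrable _ _) 0).continuousOn.congr
    eqOn_Fint_primitive

theorem CondF2B.Fint_nonpos {β B s : ℝ} (h : CondF2B f β B) (hf : ContinuousOn f (Ici 0))
    (hs : 0 ≤ s) (hsβ : s ≤ β) : Fint f s ≤ 0 := by
  obtain ⟨-, hB, hBβ, hfpos, hfneg, -, hFβ⟩ := h
  have hint : ∀ x y : ℝ, 0 ≤ x → 0 ≤ y → IntervalIntegrable f volume x y := fun x y hx hy =>
    (hf.mono fun t ht => (le_min hx hy).trans ht.1).intervalIntegrable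
  rcases le_or_gt s B with hsB | hBs
  · have h := intervalIntegral.integral_nonneg (μ := volume) hs fun t ht =>
      neg_nonneg.2 (hfneg t ⟨ht.1, ht.2.trans hsB⟩)
    rw [intervalIntegral.integral_neg] at h
    unfold Fint
    linarith
  · have hsplit := intervalIntegral.integral_add_adjacent_intervals
      (hint 0 s le_rfl hs) (hint s β hs (hB.trans hBβ).le)
    have htail : 0 ≤ ∫ t in s..β, f t :=
      intervalIntegral.integral_nonneg hsβ fun t ht => (hfpos t (hBs.trans_le ht.1)).le
    unfold Fint at hFβ ⊢
    linarith

theorem CondF2.lt_and_pos_of_Fint_pos {β B s : ℝ} (h : CondF2 f β B)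
    (hf : ContinuousOn f (Ici 0)) (hs : 0 < s) (hF : 0 < Fint f s) : β < s ∧ 0 < f s := by
  rcases h with ⟨rfl, -, -, hfpos⟩ | h
  · exact ⟨hs, hfpos s hs⟩
  · have hβs : β < s := by
      by_contra! hsβ
      exact (h.Fint_nonpos hf hs.le hsβ).not_gt hF
    obtain ⟨-, -, hBβ, hfpos, -⟩ := h
    exact ⟨hβs, hfpos s (hBβ.trans hβs)⟩

end Primitive

noncomputable def energy (f u u' : ℝ → ℝ) (r : ℝ) : ℝ := u' r ^ 2 / 2 + Fint f (u r)

namespace IsPosSolAnn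

variable {n : ℕ} {a b : ℝ} {f u u' : ℝ → ℝ}

theorem nonneg (hu : IsPosSolAnn n a b f u u') {r : ℝ} (hr : r ∈ Icc a b) : 0 ≤ u r := by
  obtain ⟨-, -, -, -, -, hua, hub, hpos⟩ := hu
  rcases hr.1.eq_or_lt with rfl | har
  · exact hua.ge
  rcases hr.2.eq_or_lt with rfl | hrb
  · exact hub.ge
  exact (hpos r ⟨har, hrb⟩).le

theorem exists_isMaxOn (hu : IsPosSolAnn n a b f u u') (hab : a < b) :
    ∃ c ∈ Ioo a b, IsMaxOn u (Icc a b) c := by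
  obtain ⟨hcont, -, -, -, -, hua, hub, hpos⟩ := hu
  obtain ⟨c, hc, hmax⟩ := isCompact_Icc.exists_isMaxOn (nonempty_Icc.2 hab.le) hcont
  have hmid : (a + b) / 2 ∈ Ioo a b := ⟨by linarith, by linarith⟩
  have huc : 0 < u c := (hpos _ hmid).trans_le (hmax (Ioo_subset_Icc_self hmid))
  refine ⟨c, ⟨hc.1.lt_of_ne ?_, hc.2.lt_of_ne ?_⟩, hmax⟩
  · rintro rfl; exact huc.ne' hua
  · rintro rfl; exact huc.ne' hub

theorem deriv_pos_of_mem_Ico (hu : IsPosSolAnn n a b f u u') {c : ℝ} (hc : c ∈ Ioo a b)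
    (hu'a : u' a ≠ 0) (hne : ∀ r ∈ Ioo a c, u' r ≠ 0) : ∀ r ∈ Ico a c, 0 < u' r := by
  obtain ⟨hcont, -, hu'_cont, hu_d, -, hua, -, hpos⟩ := hu
  obtain ⟨ξ, hξ, hslope⟩ := exists_hasDerivAt_eq_slope u u' hc.1
    (hcont.mono (Icc_subset_Icc_right hc.2.le)) fun x hx => hu_d x ⟨hx.1, hx.2.trans hc.2⟩
  have hξpos : 0 < u' ξ := by
    rw [hslope, hua, sub_zero]
    exact div_pos (hpos c hc) (sub_pos.2 hc.1)
  refine isPreconnected_Ico.pos_of_forall_ne_zero (hu'_cont.mono (Ico_subset_Icc_self.trans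
    (Icc_subset_Icc_right hc.2.le))) (fun r hr => ?_) (Ioo_subset_Ico_self hξ) hξpos
  rcases hr.1.eq_or_lt with rfl | har
  · exact hu'a
  · exact hne r ⟨har, hr.2⟩

theorem deriv_neg_of_mem_Ioo (hu : IsPosSolAnn n a b f u u') {c : ℝ} (hc : c ∈ Ioo a b)
    (hne : ∀ r ∈ Ioo c b, u' r ≠ 0) : ∀ r ∈ Ioo c b, u' r < 0 := by
  obtain ⟨hcont, -, hu'_cont, hu_d, -, -, hub, hpos⟩ := hu
  obtain ⟨ξ, hξ, hslope⟩ := exists_hasDerivAt_eq_slope u u' hc.2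
    (hcont.mono (Icc_subset_Icc_left hc.1.le)) fun x hx => hu_d x ⟨hc.1.trans hx.1, hx.2⟩
  have hξneg : 0 < -u' ξ := by
    rw [hslope, hub, zero_sub, ← neg_div, neg_neg]
    exact div_pos (hpos c hc) (sub_pos.2 hc.2)
  intro r hr
  have h := isPreconnected_Ioo.pos_of_forall_ne_zero (g := fun r => -u' r)
    (hu'_cont.mono (Ioo_subset_Icc_self.trans (Icc_subset_Icc_left hc.1.le))).neg
    (fun r hr => neg_ne_zero.2 (hne r hr)) hξ hξneg r hr
  exact neg_pos.1 h

variable (hu : IsPosSolAnn n a b f u u') (hf : ContinuousOn f (Ici 0))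
include hu hf

theorem hasDerivAt_energy {r : ℝ} (hr : r ∈ Ioo a b) :
    HasDerivAt (energy f u u') (-(((n : ℝ) - 1) / r) * u' r ^ 2) r := by
  obtain ⟨-, -, -, hu_d, hu'_d, -, -, hpos⟩ := hu
  have h : HasDerivAt (energy f u u') _ r := (((hu'_d r hr).pow 2).div_const 2).add
    ((hasDerivAt_Fint hf (hpos r hr)).comp r (hu_d r hr))
  refine h.congr_deriv ?_
  push_cast
  ring

theorem continuousOn_energy : ContinuousOn (energy f u u') (Icc a b) :=
  ((hu.2.2.1.pow 2).div_const 2).add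
    ((continuousOn_Fint hf).comp hu.1 fun _ hr => mem_Ici.2 (hu.nonneg hr))

theorem antitoneOn_energy (hn : 1 ≤ n) (ha : 0 < a) : AntitoneOn (energy f u u') (Icc a b) := by
  have hn' : (0 : ℝ) ≤ (n : ℝ) - 1 := sub_nonneg.2 (by exact_mod_cast hn)
  refine antitoneOn_of_hasDerivWithinAt_nonpos (f' := fun r => -(((n : ℝ) - 1) / r) * u' r ^ 2)
    (convex_Icc a b) (hu.continuousOn_energy hf)
    (fun r hr => ?_) fun r hr => ?_
  · rw [interior_Icc] at hr
    exact (hu.hasDerivAt_energy hf hr).hasDerivWithinAt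
  · rw [interior_Icc] at hr
    have : 0 ≤ ((n : ℝ) - 1) / r := div_nonneg hn' (ha.trans hr.1).le
    nlinarith [sq_nonneg (u' r)]

theorem energy_pos (hn : 2 ≤ n) (ha : 0 < a) {r₀ : ℝ} (hr₀ : r₀ ∈ Ioo a b) :
    0 < energy f u u' r₀ := by
  have hanti := hu.antitoneOn_energy hf (by omega) ha
  have hsub : Icc r₀ b ⊆ Icc a b := Icc_subset_Icc_left hr₀.1.le
  by_contra! hE
  have hEb : 0 ≤ energy f u u' b := by
    simp only [energy, hu.2.2.2.2.2.2.1, Fint, intervalIntegral.integral_same]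
    positivity
  have hzero : ∀ r ∈ Icc r₀ b, energy f u u' r = 0 := fun r hr => le_antisymm
    ((hanti (hsub (left_mem_Icc.2 (hr.1.trans hr.2))) (hsub hr) hr.1).trans hE)
    (hEb.trans (hanti (hsub hr) (hsub (right_mem_Icc.2 (hr.1.trans hr.2))) hr.2))
  have hu'0 : ∀ r ∈ Ioo r₀ b, u' r = 0 := by
    intro r hr
    have hrab : r ∈ Ioo a b := ⟨hr₀.1.trans hr.1, hr.2⟩
    have hconst : HasDerivAt (energy f u u') 0 r := (hasDerivAt_const r (0 : ℝ)).congr_of_eventuallyEq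
      (Filter.mem_of_superset (Ioo_mem_nhds hr.1 hr.2) fun y hy => hzero y (Ioo_subset_Icc_self hy))
    have hcoef : ((n : ℝ) - 1) / r ≠ 0 :=
      (div_pos (by linarith [show (2 : ℝ) ≤ n by exact_mod_cast hn]) (ha.trans hrab.1)).ne'
    simpa [hcoef] using (hu.hasDerivAt_energy hf hrab).unique hconst
  obtain ⟨hcont, -, -, hu_d, -, -, hub, hpos⟩ := hu
  obtain ⟨ξ, hξ, hslope⟩ := exists_hasDerivAt_eq_slope u u' hr₀.2 (hcont.mono hsub)
    fun x hx => hu_d x ⟨hr₀.1.trans hx.1, hx.2⟩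
  rw [hu'0 ξ hξ, hub, zero_sub, eq_comm, div_eq_zero_iff, neg_eq_zero, sub_eq_zero] at hslope
  rcases hslope with h | h
  · exact (hpos r₀ hr₀).ne' h
  · exact hr₀.2.ne' h

theorem deriv_left_ne_zero (hn : 2 ≤ n) (ha : 0 < a) (hab : a < b) : u' a ≠ 0 := by
  intro h0
  have hmid : (a + b) / 2 ∈ Ioo a b := ⟨by linarith, by linarith⟩
  have hle := hu.antitoneOn_energy hf (by omega) ha (left_mem_Icc.2 hab.le)
    (Ioo_subset_Icc_self hmid) hmid.1.le
  simp only [energy, h0, hu.2.2.2.2.2.1, Fint, intervalIntegral.integral_same] at hle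
  norm_num at hle
  exact hle.not_gt (hu.energy_pos hf hn ha hmid)

theorem lt_and_pos_of_deriv_eq_zero {β B : ℝ} (hf2 : CondF2 f β B) (hn : 2 ≤ n) (ha : 0 < a)
    {r : ℝ} (hr : r ∈ Ioo a b) (h0 : u' r = 0) : β < u r ∧ 0 < f (u r) := by
  have hE := hu.energy_pos hf hn ha hr
  simp only [energy, h0] at hE
  norm_num at hE
  exact hf2.lt_and_pos_of_Fint_pos hf (hu.2.2.2.2.2.2.2 r hr) hE

theorem eq_of_deriv_eq_zero {β B : ℝ} (hf2 : CondF2 f β B) (hn : 2 ≤ n) (ha : 0 < a)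
    {r₀ r₁ : ℝ} (hr₀ : r₀ ∈ Ioo a b) (hr₁ : r₁ ∈ Ioo a b) (h₀ : u' r₀ = 0) (h₁ : u' r₁ = 0) :
    r₀ = r₁ := by
  refine eq_of_deriv_eq_zero_of_strictLocalMax hu.2.2.2.1 (fun r hr h0 => ?_) hr₀ hr₁ h₀ h₁
  have hd := hu.2.2.2.2.1 r hr
  rw [h0, mul_zero, zero_add] at hd
  exact eventually_lt_of_hasDerivAt_deriv_neg
    (Filter.mem_of_superset (Ioo_mem_nhds hr.1 hr.2) hu.2.2.2.1) hd
    (neg_lt_zero.2 (hu.lt_and_pos_of_deriv_eq_zero hf hf2 hn ha hr h0).2) h0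

end IsPosSolAnn

/-- Proposition 2.1 (ii): under (f1), (f2), a positive solution `u` of (R) has a unique
critical point `c ∈ (a,b)`, with `u' > 0` on `[a,c)`, `u' < 0` on `(c,b)` and `u(c) > β`. -/
theorem unique_max_point
    (n : ℕ) (hn : 2 ≤ n) (f : ℝ → ℝ) (β B : ℝ)
    (hf1 : CondF1 f) (hf2 : CondF2 f β B)
    (a b : ℝ) (ha : 0 < a) (hab : a < b)
    (u u' : ℝ → ℝ) (hu : IsPosSolAnn n a b f u u') :
    ∃ c ∈ Ioo a b, (∀ r ∈ Ico a c, 0 < u' r) ∧ (∀ r ∈ Ioo c b, u' r < 0) ∧ β < u c := by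
  have hf := hf1.1
  obtain ⟨c, hc, hmax⟩ := hu.exists_isMaxOn hab
  have hc0 : u' c = 0 :=
    (hmax.isLocalMax (Icc_mem_nhds hc.1 hc.2)).hasDerivAt_eq_zero (hu.2.2.2.1 c hc)
  have hne : ∀ r ∈ Ioo a b, r ≠ c → u' r ≠ 0 := fun r hr hrc h0 =>
    hrc (hu.eq_of_deriv_eq_zero hf hf2 hn ha hr hc h0 hc0)
  refine ⟨c, hc, ?_, ?_, (hu.lt_and_pos_of_deriv_eq_zero hf hf2 hn ha hc hc0).1⟩
  · exact hu.deriv_pos_of_mem_Ico hc (hu.deriv_left_ne_zero hf hn ha hab)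
      fun r hr => hne r ⟨hr.1, hr.2.trans hc.2⟩ hr.2.ne
  · exact hu.deriv_neg_of_mem_Ioo hc fun r hr => hne r ⟨hc.1.trans hr.1, hr.2⟩ hr.1.ne'
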